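/- Suppose p is a fixed point of a homeomorphism f of a compact metric space M, and S = ⋃_{K>0} S_K is an f-invariant set (f(S) = S) exhausted by compact pieces S_K with the contraction property: for every K and every ε > 0 there is n such that f^n(S_K) ⊆ S_ε, where S_ε is the piece of S within the ε-ball of p. If every leaf W(x) of an f-covariant family (f(W(x)) = W(f(x))) meets S_{K₀} for a uniform K₀, then for every ε > 0 and every x, the leaf W(x) meets S_ε; in particular every leaf comes ε-close to p for all ε > 0. -/

import Mathlib

/-! Pull back by `f^n`: the leaf `W(f^{-n} x)` meets `S_{K₀}`, and `f^n` maps it onto `W(x)` while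
mapping `S_{K₀}` into `S_ε`. -/

open Metric Set Function

lemma image_iterate_eq_of_image_eq {α β : Type*} {f : α → α} {g : β → β} {W : β → Set α}
    (hcov : ∀ x, f '' W x = W (g x)) (n : ℕ) (x : β) :
    f^[n] '' W x = W (g^[n] x) := by
  have hsemi : Semiconj W g (image f) := fun x => (hcov x).symm
  rw [hsemi.iterate_right n x, image_iterate_eq]

lemma leaf_inter_image_iterate_nonempty {α : Type*} {f g : α → α} (hfg : LeftInverse f g)
    {W : α → Set α} (hcov : ∀ x, f '' W x = W (f x)) {A : Set α} {x : α} (n : ℕ)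
    (hmeet : (W (g^[n] x) ∩ A).Nonempty) : (W x ∩ f^[n] '' A).Nonempty := by
  obtain ⟨y, hyW, hyA⟩ := hmeet
  have hleaf : f^[n] '' W (g^[n] x) = W x := by
    rw [image_iterate_eq_of_image_eq hcov, hfg.iterate n x]
  exact ⟨f^[n] y, hleaf ▸ mem_image_of_mem _ hyW, y, hyA, rfl⟩

theorem leaves_meet_small_stable_pieces_general {M : Type*} [MetricSpace M]
    (f : M ≃ₜ M) (p : M)
    (S : Set M)
    (SK : ℝ → Set M)
    (SE : ℝ → Set M) (hSE : ∀ ε > (0 : ℝ), SE ε ⊆ ball p ε ∩ S)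
    (hcontract : ∀ K : ℝ, ∀ ε > (0 : ℝ), ∃ n : ℕ, (f : M → M)^[n] '' SK K ⊆ SE ε)
    (W : M → Set M) (hcov : ∀ x, f '' W x = W (f x))
    (K₀ : ℝ) (hmeet : ∀ x : M, ∀ n : ℕ, (W (((f.symm : M → M))^[n] x) ∩ SK K₀).Nonempty) :
    ∀ ε > (0 : ℝ), ∀ x : M, (W x ∩ SE ε).Nonempty ∧ ∃ y ∈ W x, dist y p < ε := by
  intro ε hε x
  obtain ⟨n, hn⟩ := hcontract K₀ ε hε
  obtain ⟨y, hyW, hyK⟩ :=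
    leaf_inter_image_iterate_nonempty f.apply_symm_apply hcov n (hmeet x n)
  have hyE : y ∈ SE ε := hn hyK
  exact ⟨⟨y, hyW, hyE⟩, y, hyW, (hSE ε hε hyE).1⟩

/-- Step 3 of the Minimality Criterion: if `f^n` contracts the compact pieces `S_K` of the
invariant set `S` into arbitrarily small neighborhoods of the fixed point `p`, and every leaf
of the `f`-covariant family meets `S_{K₀}` along all backward iterates, then every leaf meets
`S_ε` for every `ε > 0`; in particular every leaf comes `ε`-close to `p`. -/
theorem leaves_meet_small_stable_pieces {M : Type*} [MetricSpace M] [CompactSpace M]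
    (f : M ≃ₜ M) (p : M) (hp : f p = p)
    (S : Set M) (hSinv : f '' S = S)
    (SK : ℝ → Set M) (hScpt : ∀ K, IsCompact (SK K))
    (hSmono : ∀ K K' : ℝ, K ≤ K' → SK K ⊆ SK K') (hSexh : S = ⋃ K : ℝ, SK K)
    (SE : ℝ → Set M) (hSE : ∀ ε > (0 : ℝ), SE ε ⊆ ball p ε ∩ S)
    (hcontract : ∀ K : ℝ, ∀ ε > (0 : ℝ), ∃ n : ℕ, (f : M → M)^[n] '' SK K ⊆ SE ε)
    (W : M → Set M) (hcov : ∀ x, f '' W x = W (f x))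
    (K₀ : ℝ) (hmeet : ∀ x : M, ∀ n : ℕ, (W (((f.symm : M → M))^[n] x) ∩ SK K₀).Nonempty) :
    ∀ ε > (0 : ℝ), ∀ x : M, (W x ∩ SE ε).Nonempty ∧ ∃ y ∈ W x, dist y p < ε :=
  leaves_meet_small_stable_pieces_general f p S SK SE hSE hcontract W hcov K₀ hmeet
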